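/- For any density matrix ρ, the fidelity of imaginarity satisfies F_I(ρ) = 1/2 + (1/4)‖ρ − ρ^T‖₁, where ‖·‖₁ is the trace norm and ρ^T is the transpose in the computational basis. -/

import Mathlib

open Matrix ComplexOrder

/-- The trace norm of a complex matrix: the sum of its singular values, i.e. tr √(AᴴA). -/
noncomputable def traceNorm {d : Type*} [Fintype d] [DecidableEq d]
    (A : Matrix d d ℂ) : ℝ :=
  (((Matrix.posSemidef_conjTranspose_mul_self A).1.eigenvectorUnitary.1 *
      diagonal (((↑) : ℝ → ℂ) ∘ Real.sqrt ∘ (Matrix.posSemidef_conjTranspose_mul_self A).1.eigenvalues) *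
      (star (Matrix.posSemidef_conjTranspose_mul_self A).1.eigenvectorUnitary : Matrix d d ℂ)).trace).re

/-- Projector onto the maximally imaginary state |+̂⟩ = (|0⟩ + i|1⟩)/√2. -/
noncomputable def Pplus : Matrix (Fin 2) (Fin 2) ℂ :=
  (1/2 : ℂ) • !![1, -Complex.I; Complex.I, 1]

/-!
Write `Y` for the Pauli matrix, so that `|+̂⟩⟨+̂| = (1 + Y) / 2`. For a real Kraus operator `K`
the matrix `Kᵀ Y K` is antisymmetric, so only the antisymmetric part of `ρ` sees it: the fidelity
of the output is `1/2 + tr((ρ - ρᵀ) B) / 4` with `B = ∑ Kⱼᴴ Y Kⱼ`. Since `1 ± Y ≥ 0` and the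
channel is trace preserving, `-1 ≤ B ≤ 1`, hence `tr((ρ - ρᵀ) B) ≤ ‖ρ - ρᵀ‖₁`.

Conversely `M = ρ - ρᵀ` is Hermitian and antisymmetric. For a unit eigenvector `v = x + i y`
with eigenvalue `λ`, antisymmetry gives `λ = vᴴ M v = 2i xᵀ M y`, which is exactly what the real
Kraus operator with rows `x, y` contributes; swapping the rows flips the sign. Over an orthonormal
eigenbasis these operators form a real channel, and choosing the order of the rows by the sign of
`λ` attains `∑ |λ| = ‖M‖₁`.
-/

variable {n : Type*}

section TraceNorm

variable [Fintype n] [DecidableEq n]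

open scoped MatrixOrder

theorem traceNorm_eq_re_trace_abs (A : Matrix n n ℂ) : traceNorm A = (CFC.abs A).trace.re := by
  have hP := posSemidef_conjTranspose_mul_self A
  rw [CFC.abs, star_eq_conjTranspose, CFC.sqrt_eq_real_sqrt _ (nonneg_iff_posSemidef.mpr hP),
    cfcₙ_eq_cfc, hP.1.cfc_eq, IsHermitian.cfc, Unitary.conjStarAlgAut_apply]
  rfl

theorem Matrix.IsHermitian.trace_cfc {M : Matrix n n ℂ} (hM : M.IsHermitian) (f : ℝ → ℝ) :
    (hM.cfc f).trace = ∑ i, (f (hM.eigenvalues i) : ℂ) := by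
  rw [IsHermitian.cfc, Unitary.conjStarAlgAut_apply, trace_mul_cycle, Unitary.coe_star_mul_self,
    one_mul, trace_diagonal]
  rfl

theorem traceNorm_eq_sum_abs_eigenvalues {M : Matrix n n ℂ} (hM : M.IsHermitian) :
    traceNorm M = ∑ i, |hM.eigenvalues i| := by
  rw [traceNorm_eq_re_trace_abs, CFC.abs_eq_cfc_norm M hM.isSelfAdjoint, hM.cfc_eq,
    hM.trace_cfc, ← Complex.ofReal_sum, Complex.ofReal_re]
  rfl

theorem re_trace_mul_le_sum_abs_eigenvalues {M B : Matrix n n ℂ} (hM : M.IsHermitian)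
    (h₁ : (1 + B).PosSemidef) (h₂ : (1 - B).PosSemidef) :
    (M * B).trace.re ≤ ∑ i, |hM.eigenvalues i| := by
  set U : Matrix n n ℂ := (hM.eigenvectorUnitary : Matrix n n ℂ)
  set C := star U * B * U
  have hdiag : ∀ i, |(C i i).re| ≤ 1 := by
    intro i
    have hC : ∀ s : ℂ, (1 + s • B).PosSemidef → 0 ≤ ((1 + s • C) i i).re := fun s hs => by
      have hUCU : star U * (1 + s • B) * U = 1 + s • C := by
        simp [C, Matrix.mul_add, Matrix.add_mul, U]
      rw [← hUCU]
      exact (Complex.nonneg_iff.mp (hs.conjTranspose_mul_mul_same U).diag_nonneg).1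
    have h₁' := hC 1 (by rwa [one_smul])
    have h₂' := hC (-1) (by rwa [neg_one_smul, ← sub_eq_add_neg])
    simp only [one_smul, neg_smul, Matrix.add_apply, Matrix.neg_apply, one_apply_eq,
      Complex.add_re, Complex.one_re, Complex.neg_re, le_add_neg_iff_add_le, zero_add] at h₁' h₂'
    rw [abs_le]
    constructor <;> linarith
  have htr : (M * B).trace = ∑ i, (hM.eigenvalues i : ℂ) * C i i := by
    conv_lhs => rw [hM.spectral_theorem, Unitary.conjStarAlgAut_apply]
    rw [Matrix.mul_assoc, trace_mul_comm, ← Matrix.mul_assoc]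
    simp [trace, mul_diagonal, C, U, mul_comm]
  rw [htr, Complex.re_sum]
  refine Finset.sum_le_sum fun i _ => ?_
  rw [Complex.re_ofReal_mul]
  calc hM.eigenvalues i * (C i i).re ≤ |hM.eigenvalues i| * |(C i i).re| := by
        rw [← abs_mul]; exact le_abs_self _
    _ ≤ |hM.eigenvalues i| := mul_le_of_le_one_right (abs_nonneg _) (hdiag i)

end TraceNorm

section Antisymmetric

theorem conjTranspose_eq_transpose_of_im_eq_zero {m : Type*} {K : Matrix m n ℂ}
    (hK : ∀ a b, (K a b).im = 0) : Kᴴ = Kᵀ := by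
  ext a b
  exact Complex.conj_eq_iff_im.mpr (hK b a)

variable [Fintype n]

theorem trace_transpose_mul_of_transpose_eq_neg {R : Type*} [CommRing R] (A : Matrix n n R)
    {B : Matrix n n R} (hB : Bᵀ = -B) : (Aᵀ * B).trace = -(A * B).trace := by
  rw [← trace_transpose, transpose_mul, transpose_transpose, hB, Matrix.neg_mul, trace_neg,
    trace_mul_comm]

theorem two_mul_trace_mul_of_transpose_eq_neg {R : Type*} [CommRing R] (A : Matrix n n R)
    {B : Matrix n n R} (hB : Bᵀ = -B) : 2 * (A * B).trace = ((A - Aᵀ) * B).trace := by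
  rw [sub_mul, trace_sub, trace_transpose_mul_of_transpose_eq_neg A hB]
  ring

theorem dotProduct_mulVec_swap_of_transpose_eq_neg {M : Matrix n n ℂ} (hM : Mᵀ = -M)
    (x y : n → ℂ) : y ⬝ᵥ M *ᵥ x = -(x ⬝ᵥ M *ᵥ y) := by
  rw [dotProduct_mulVec, ← mulVec_transpose, hM, neg_mulVec, neg_dotProduct, dotProduct_comm]

theorem star_dotProduct_mulVec_self_of_transpose_eq_neg {M : Matrix n n ℂ} (hM : Mᵀ = -M)
    (v : n → ℂ) : star v ⬝ᵥ M *ᵥ v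
      = 2 * Complex.I * ((fun a => ((v a).re : ℂ)) ⬝ᵥ M *ᵥ fun a => ((v a).im : ℂ)) := by
  set x : n → ℂ := fun a => ((v a).re : ℂ)
  set y : n → ℂ := fun a => ((v a).im : ℂ)
  have hv : v = x + Complex.I • y := by
    ext a
    rw [Pi.add_apply, Pi.smul_apply, smul_eq_mul, mul_comm]
    exact (Complex.re_add_im _).symm
  have hsv : star v = x - Complex.I • y := by
    ext a
    apply Complex.ext <;> simp [x, y]
  have hxx := dotProduct_mulVec_swap_of_transpose_eq_neg hM x x
  have hyy := dotProduct_mulVec_swap_of_transpose_eq_neg hM y y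
  have hxy := dotProduct_mulVec_swap_of_transpose_eq_neg hM x y
  rw [hsv, hv]
  simp only [mulVec_add, mulVec_smul, sub_dotProduct, dotProduct_add, smul_dotProduct,
    dotProduct_smul, smul_eq_mul] at hxy ⊢
  linear_combination
    (1/2) * hxx + (1/2) * hyy - Complex.I * hxy - (y ⬝ᵥ M *ᵥ y) * Complex.I_sq

end Antisymmetric

def pauliY : Matrix (Fin 2) (Fin 2) ℂ := !![0, -Complex.I; Complex.I, 0]

theorem pauliY_transpose : pauliYᵀ = -pauliY := by
  ext i j; fin_cases i <;> fin_cases j <;> simp [pauliY]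

theorem Pplus_eq_half_smul_one_add_pauliY : Pplus = (1/2 : ℂ) • (1 + pauliY) := by
  rw [Pplus, pauliY, one_fin_two]
  congr 1
  ext i j; fin_cases i <;> fin_cases j <;> simp

theorem posSemidef_one_add_pauliY : (1 + pauliY).PosSemidef := by
  convert posSemidef_self_mul_conjTranspose !![(1 : ℂ); Complex.I]
  ext i j; fin_cases i <;> fin_cases j <;> simp [pauliY, mul_apply]

theorem posSemidef_one_sub_pauliY : (1 - pauliY).PosSemidef := by
  convert posSemidef_self_mul_conjTranspose !![(1 : ℂ); -Complex.I]
  ext i j; fin_cases i <;> fin_cases j <;> simp [pauliY, mul_apply]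

theorem transpose_conjTranspose_mul_pauliY_mul [Fintype n] {K : Matrix (Fin 2) n ℂ}
    (hK : Kᴴ = Kᵀ) : (Kᴴ * pauliY * K)ᵀ = -(Kᴴ * pauliY * K) := by
  rw [hK, transpose_mul, transpose_mul, transpose_transpose, pauliY_transpose]
  simp only [Matrix.neg_mul, Matrix.mul_neg, Matrix.mul_assoc]

section Kraus

variable [Fintype n] [DecidableEq n] {ι : Type*} [Fintype ι]

theorem trace_sum_mul_mul_conjTranspose {m : Type*} [Fintype m] {K : ι → Matrix m n ℂ}
    (hK : ∑ j, (K j)ᴴ * K j = 1) (ρ : Matrix n n ℂ) :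
    (∑ j, K j * ρ * (K j)ᴴ).trace = ρ.trace := by
  simp_rw [trace_sum, trace_mul_cycle (K _), ← trace_sum, ← Finset.sum_mul, hK, one_mul]

theorem re_trace_sum_mul_mul_conjTranspose_mul_Pplus {K : ι → Matrix (Fin 2) n ℂ}
    (hreal : ∀ j a b, (K j a b).im = 0) (hK : ∑ j, (K j)ᴴ * K j = 1)
    {ρ : Matrix n n ℂ} (hρ : ρ.trace = 1) :
    ((∑ j, K j * ρ * (K j)ᴴ) * Pplus).trace.re
      = 1/2 + ((ρ - ρᵀ) * ∑ j, (K j)ᴴ * pauliY * K j).trace.re / 4 := by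
  have hY : 2 * ((∑ j, K j * ρ * (K j)ᴴ) * pauliY).trace
      = ((ρ - ρᵀ) * ∑ j, (K j)ᴴ * pauliY * K j).trace := by
    simp_rw [Finset.sum_mul, Finset.mul_sum, trace_sum, Finset.mul_sum]
    refine Finset.sum_congr rfl fun j _ => ?_
    rw [← two_mul_trace_mul_of_transpose_eq_neg ρ (transpose_conjTranspose_mul_pauliY_mul
      (conjTranspose_eq_transpose_of_im_eq_zero (hreal j))),
      show K j * ρ * (K j)ᴴ * pauliY = K j * (ρ * (K j)ᴴ * pauliY) by
        simp only [Matrix.mul_assoc],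
      trace_mul_comm]
    simp only [Matrix.mul_assoc]
  rw [Pplus_eq_half_smul_one_add_pauliY, Matrix.mul_smul, trace_smul, mul_add, mul_one, trace_add,
    trace_sum_mul_mul_conjTranspose hK, hρ, ← hY, smul_eq_mul, mul_comm, ← div_eq_mul_one_div,
    Complex.div_ofNat_re, Complex.add_re, Complex.one_re, Complex.mul_re, Complex.re_ofNat,
    Complex.im_ofNat]
  ring

theorem posSemidef_one_add_sum_conjTranspose_mul_mul {m : Type*} [Fintype m] [DecidableEq m]
    {K : ι → Matrix m n ℂ} (hK : ∑ j, (K j)ᴴ * K j = 1) {P : Matrix m m ℂ}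
    (hP : (1 + P).PosSemidef) : (1 + ∑ j, (K j)ᴴ * P * K j).PosSemidef := by
  have : 1 + ∑ j, (K j)ᴴ * P * K j = ∑ j, (K j)ᴴ * (1 + P) * K j := by
    simp [Matrix.mul_add, Matrix.add_mul, Finset.sum_add_distrib, hK]
  rw [this]
  exact posSemidef_sum _ fun j _ => hP.conjTranspose_mul_mul_same (K j)

theorem posSemidef_one_sub_sum_conjTranspose_mul_mul {m : Type*} [Fintype m] [DecidableEq m]
    {K : ι → Matrix m n ℂ} (hK : ∑ j, (K j)ᴴ * K j = 1) {P : Matrix m m ℂ}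
    (hP : (1 - P).PosSemidef) : (1 - ∑ j, (K j)ᴴ * P * K j).PosSemidef := by
  have := posSemidef_one_add_sum_conjTranspose_mul_mul hK (P := -P) (by rwa [← sub_eq_add_neg])
  simpa only [Matrix.mul_neg, Matrix.neg_mul, Finset.sum_neg_distrib, ← sub_eq_add_neg] using this

end Kraus

section RowPair

def rowPair (u w : n → ℝ) : Matrix (Fin 2) n ℂ := of ![fun a => u a, fun a => w a]

theorem rowPair_im (u w : n → ℝ) (r : Fin 2) (a : n) : (rowPair u w r a).im = 0 := by
  fin_cases r <;> simp [rowPair]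

theorem conjTranspose_rowPair_mul_rowPair (u w : n → ℝ) :
    (rowPair u w)ᴴ * rowPair u w = of fun a b => ((u a * u b + w a * w b : ℝ) : ℂ) := by
  ext a b
  simp [rowPair, mul_apply, Fin.sum_univ_two]

theorem conjTranspose_rowPair_swap_mul_rowPair_swap (u w : n → ℝ) :
    (rowPair w u)ᴴ * rowPair w u = (rowPair u w)ᴴ * rowPair u w := by
  simp only [conjTranspose_rowPair_mul_rowPair, add_comm]

variable [Fintype n]

theorem trace_mul_conjTranspose_rowPair_mul_pauliY_mul {M : Matrix n n ℂ} (hM : Mᵀ = -M)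
    (u w : n → ℝ) :
    (M * ((rowPair u w)ᴴ * pauliY * rowPair u w)).trace
      = 2 * Complex.I * ((fun a => (u a : ℂ)) ⬝ᵥ M *ᵥ fun a => (w a : ℂ)) := by
  set u' : n → ℂ := fun a => (u a : ℂ)
  set w' : n → ℂ := fun a => (w a : ℂ)
  have hY : (rowPair u w)ᴴ * pauliY * rowPair u w
      = Complex.I • (vecMulVec w' u' - vecMulVec u' w') := by
    ext a b
    simp only [rowPair, pauliY, mul_apply, conjTranspose_apply, of_apply, cons_val',
      cons_val_fin_one, RCLike.star_def, Fin.sum_univ_two, cons_val_zero, cons_val_one,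
      Complex.conj_ofReal, mul_zero, zero_add, add_zero, mul_neg, neg_mul, Matrix.smul_apply,
      Matrix.sub_apply, vecMulVec_apply, smul_eq_mul, u', w']
    ring
  rw [hY, Matrix.mul_smul, Matrix.mul_sub, mul_vecMulVec, mul_vecMulVec, trace_smul, trace_sub,
    trace_vecMulVec, trace_vecMulVec, dotProduct_comm, dotProduct_comm (M *ᵥ u'),
    dotProduct_mulVec_swap_of_transpose_eq_neg hM u' w', smul_eq_mul]
  ring

variable [DecidableEq n]

theorem sum_conjTranspose_rowPair_re_im_mul_self {U : Matrix n n ℂ}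
    (hU : U ∈ unitaryGroup n ℂ) :
    ∑ j, (rowPair (fun a => (U a j).re) (fun a => (U a j).im))ᴴ *
      rowPair (fun a => (U a j).re) (fun a => (U a j).im) = 1 := by
  ext a b
  have h := congrArg Complex.re (congrFun (congrFun (mem_unitaryGroup_iff.mp hU) a) b)
  simp only [conjTranspose_rowPair_mul_rowPair, Matrix.sum_apply, of_apply, mul_apply,
    star_apply, Complex.re_sum, Complex.mul_re, RCLike.star_def, Complex.conj_re,
    Complex.conj_im, mul_neg, sub_neg_eq_add] at h ⊢
  rw [← Complex.ofReal_sum, h]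
  by_cases hab : a = b <;> simp [one_apply, hab]

theorem exists_real_kraus_re_trace_eq_sum_abs_eigenvalues {M : Matrix n n ℂ}
    (hM : M.IsHermitian) (hMT : Mᵀ = -M) :
    ∃ K : n → Matrix (Fin 2) n ℂ, (∀ j a b, (K j a b).im = 0) ∧ ∑ j, (K j)ᴴ * K j = 1 ∧
      (M * ∑ j, (K j)ᴴ * pauliY * K j).trace.re = ∑ j, |hM.eigenvalues j| := by
  set U : Matrix n n ℂ := (hM.eigenvectorUnitary : Matrix n n ℂ)
  set x : n → n → ℝ := fun j a => (U a j).re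
  set y : n → n → ℝ := fun j a => (U a j).im
  have heig : ∀ j, (2 * Complex.I * ((fun a => (x j a : ℂ)) ⬝ᵥ M *ᵥ fun a => (y j a : ℂ))).re
      = hM.eigenvalues j := by
    intro j
    rw [hM.eigenvalues_eq, ← star_dotProduct_mulVec_self_of_transpose_eq_neg hMT]
    rfl
  refine ⟨fun j => if 0 ≤ hM.eigenvalues j then rowPair (x j) (y j) else rowPair (y j) (x j),
    fun j a b => ?_, ?_, ?_⟩
  · beta_reduce
    split_ifs <;> exact rowPair_im _ _ _ _
  · simp only [apply_ite (fun K : Matrix (Fin 2) n ℂ => Kᴴ * K),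
      conjTranspose_rowPair_swap_mul_rowPair_swap, ite_self]
    exact sum_conjTranspose_rowPair_re_im_mul_self hM.eigenvectorUnitary.2
  · rw [Matrix.mul_sum, trace_sum, Complex.re_sum]
    refine Finset.sum_congr rfl fun j _ => ?_
    beta_reduce
    split_ifs with hj
    · rw [trace_mul_conjTranspose_rowPair_mul_pauliY_mul hMT, heig, abs_of_nonneg hj]
    · rw [trace_mul_conjTranspose_rowPair_mul_pauliY_mul hMT,
        dotProduct_mulVec_swap_of_transpose_eq_neg hMT, mul_neg, Complex.neg_re, heig,
        abs_of_neg (not_le.mp hj)]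

end RowPair

/-- For any density matrix ρ, the fidelity of imaginarity (maximal fidelity of the
output of a real CPTP map with |+̂⟩, attained) equals 1/2 + ‖ρ − ρᵀ‖₁/4. -/
theorem fidelity_of_imaginarity_trace_norm {d : ℕ}
    (ρ : Matrix (Fin d) (Fin d) ℂ) (hρ : ρ.PosSemidef) (htr : ρ.trace = 1) :
    IsGreatest {x : ℝ | ∃ (n : ℕ) (K : Fin n → Matrix (Fin 2) (Fin d) ℂ),
        (∀ j a b, ((K j) a b).im = 0) ∧
        (∑ j, (K j)ᴴ * K j = 1) ∧
        x = ((∑ j, K j * ρ * (K j)ᴴ) * Pplus).trace.re}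
      (1/2 + traceNorm (ρ - ρᵀ) / 4) := by
  have hM : (ρ - ρᵀ).IsHermitian := hρ.1.sub hρ.1.transpose
  have hMT : (ρ - ρᵀ)ᵀ = -(ρ - ρᵀ) := by rw [transpose_sub, transpose_transpose, neg_sub]
  rw [traceNorm_eq_sum_abs_eigenvalues hM]
  constructor
  · obtain ⟨K, hreal, hK, htrace⟩ := exists_real_kraus_re_trace_eq_sum_abs_eigenvalues hM hMT
    refine ⟨d, K, hreal, hK, ?_⟩
    rw [re_trace_sum_mul_mul_conjTranspose_mul_Pplus hreal hK htr, htrace]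
  · rintro x ⟨n, K, hreal, hK, rfl⟩
    rw [re_trace_sum_mul_mul_conjTranspose_mul_Pplus hreal hK htr]
    have := re_trace_mul_le_sum_abs_eigenvalues hM
      (posSemidef_one_add_sum_conjTranspose_mul_mul hK posSemidef_one_add_pauliY)
      (posSemidef_one_sub_sum_conjTranspose_mul_mul hK posSemidef_one_sub_pauliY)
    linarith
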